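/- arXiv:2411.16015 — 3 statements merged into one kernel-verified Lean document; each statement's English description precedes it below -/
import Mathlib

section
/- Let A ∈ ℝ^{m×n} have full row rank, let x ∈ ℝⁿ with x > 0, set M_X = AX²Aᵀ and λ_x = λ_min(M_X) > 0. Then for any β ≤ 1 and any Δx ∈ ℝⁿ with ‖Δx‖ ≤ (√λ_x / ‖A‖)·β, writing ΔX = diag(Δx), one has (1 − β)²·I ⪯ M_X^{−1/2} (M_{X+ΔX}) M_X^{−1/2} ⪯ (1 + β)²·I; moreover, if β < 1, then M_{X+ΔX} is positive definite and κ(M_X^{−1/2} (M_{X+ΔX}) M_X^{−1/2}) ≤ ((1 + β)/(1 − β))². -/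
open Matrix

noncomputable def euclNorm {ι : Type*} [Fintype ι] (v : ι → ℝ) : ℝ :=
  Real.sqrt (∑ i, (v i) ^ 2)

noncomputable def opNorm {ι κ : Type*} [Fintype ι] [Fintype κ]
    (M : Matrix ι κ ℝ) : ℝ :=
  sSup {r : ℝ | ∃ v : κ → ℝ, euclNorm v ≤ 1 ∧ r = euclNorm (M *ᵥ v)}

noncomputable def lambdaMin {ι : Type*} [Fintype ι] (M : Matrix ι ι ℝ) : ℝ :=
  sInf {r : ℝ | ∃ v : ι → ℝ, euclNorm v = 1 ∧ r = v ⬝ᵥ (M *ᵥ v)}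

noncomputable def lambdaMax {ι : Type*} [Fintype ι] (M : Matrix ι ι ℝ) : ℝ :=
  sSup {r : ℝ | ∃ v : ι → ℝ, euclNorm v = 1 ∧ r = v ⬝ᵥ (M *ᵥ v)}

noncomputable def condNum {ι : Type*} [Fintype ι] (M : Matrix ι ι ℝ) : ℝ :=
  lambdaMax M / lambdaMin M

noncomputable def gradProj {m n : ℕ} (B : Matrix (Fin m) (Fin n) ℝ) :
    Matrix (Fin n) (Fin n) ℝ :=
  1 - Bᵀ * (B * Bᵀ)⁻¹ * B

/-- The proximity measure `δ(x, μ) = ‖P_{AX}((1/μ) X c - e)‖`. -/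
noncomputable def prox {m n : ℕ} (A : Matrix (Fin m) (Fin n) ℝ)
    (c x : Fin n → ℝ) (μ : ℝ) : ℝ :=
  euclNorm (gradProj (A * Matrix.diagonal x) *ᵥ (μ⁻¹ • (Matrix.diagonal x *ᵥ c) - 1))

/-- The proximity measure as `min_{(y,s) ∈ F_d} ‖(1/μ) X s - e‖`. -/
noncomputable def proxMin {m n : ℕ} (A : Matrix (Fin m) (Fin n) ℝ)
    (c x : Fin n → ℝ) (μ : ℝ) : ℝ :=
  sInf {r : ℝ | ∃ (y : Fin m → ℝ) (s : Fin n → ℝ),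
    Aᵀ *ᵥ y + s = c ∧ (∀ i, 0 ≤ s i) ∧
    r = euclNorm (μ⁻¹ • (Matrix.diagonal x *ᵥ s) - 1)}

/-- The primal normal matrix `A X² Aᵀ` is positive semidefinite. -/
theorem normalPSD {m n : ℕ} (A : Matrix (Fin m) (Fin n) ℝ) (x : Fin n → ℝ) :
    (A * Matrix.diagonal x ^ 2 * Aᵀ).PosSemidef := by
  have h : A * Matrix.diagonal x ^ 2 * Aᵀ
      = (A * Matrix.diagonal x) * (A * Matrix.diagonal x)ᴴ := by
    rw [Matrix.conjTranspose_mul, Matrix.conjTranspose_eq_transpose_of_trivial,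
      Matrix.conjTranspose_eq_transpose_of_trivial, Matrix.diagonal_transpose, pow_two,
      Matrix.mul_assoc, Matrix.mul_assoc, Matrix.mul_assoc]
  rw [h]
  exact Matrix.posSemidef_self_mul_conjTranspose _

/-- The positive semidefinite square root of a positive semidefinite matrix
(as defined in Mathlib of December 2024, since removed). -/
noncomputable def Matrix.PosSemidef.sqrt {n : Type*} [Fintype n] [DecidableEq n]
    {A : Matrix n n ℝ} (hA : A.PosSemidef) : Matrix n n ℝ :=
  hA.1.eigenvectorUnitary.1 * diagonal ((↑) ∘ (Real.sqrt ∘ hA.1.eigenvalues)) *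
  (star hA.1.eigenvectorUnitary : Matrix n n ℝ)

/-
Write `M_d = A D² Aᵀ` with `D = diag d`. The quadratic form of `M_d` at `w` is `‖d ∘ Aᵀw‖²`, so
with `u = Aᵀw` the perturbed form is `‖x ∘ u + Δx ∘ u‖²`, and
`‖Δx ∘ u‖ ≤ ‖Δx‖ ‖A‖ ‖w‖ ≤ β √λ_x ‖w‖ ≤ β ‖x ∘ u‖` because `λ_x ‖w‖² ≤ wᵀ M_x w = ‖x ∘ u‖²`.
The triangle inequality then gives `(1 - β)² M_x ⪯ M_{x+Δx} ⪯ (1 + β)² M_x`, and congruence by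
`M_x^{-1/2}` turns this into the bounds of the theorem, which also pin down the extreme Rayleigh
quotients and hence the condition number.
-/

open scoped Matrix.Norms.L2Operator

section EuclNorm

variable {ι : Type*} [Fintype ι]

lemma euclNorm_eq_norm_toLp (v : ι → ℝ) : euclNorm v = ‖WithLp.toLp 2 v‖ := by
  simp [euclNorm, EuclideanSpace.norm_eq, sq_abs]

lemma euclNorm_nonneg (v : ι → ℝ) : 0 ≤ euclNorm v :=
  Real.sqrt_nonneg _

lemma euclNorm_sq (v : ι → ℝ) : euclNorm v ^ 2 = ∑ i, v i ^ 2 :=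
  Real.sq_sqrt (Finset.sum_nonneg fun _ _ => sq_nonneg _)

lemma dotProduct_self_eq_euclNorm_sq (v : ι → ℝ) : v ⬝ᵥ v = euclNorm v ^ 2 := by
  rw [euclNorm_sq]
  simp [dotProduct, sq]

lemma euclNorm_mul_le (a b : ι → ℝ) : euclNorm (a * b) ≤ euclNorm a * euclNorm b := by
  unfold euclNorm
  rw [← Real.sqrt_mul (Finset.sum_nonneg fun _ _ => sq_nonneg _)]
  refine Real.sqrt_le_sqrt ?_
  rw [Finset.sum_mul_sum]
  calc ∑ i, (a * b) i ^ 2 = ∑ i, a i ^ 2 * b i ^ 2 := by simp [mul_pow]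
    _ ≤ ∑ i, ∑ j, a i ^ 2 * b j ^ 2 := Finset.sum_le_sum fun i _ =>
      Finset.single_le_sum (f := fun j => a i ^ 2 * b j ^ 2) (fun _ _ => by positivity)
        (Finset.mem_univ i)

lemma exists_euclNorm_eq_one [DecidableEq ι] [Nonempty ι] : ∃ v : ι → ℝ, euclNorm v = 1 :=
  ⟨(PiLp.single 2 (Classical.arbitrary ι) (1 : ℝ)).ofLp, by
    rw [euclNorm_eq_norm_toLp, WithLp.toLp_ofLp, PiLp.norm_single, norm_one]⟩

end EuclNorm

section OpNorm

variable {ι κ : Type*} [Fintype ι] [Fintype κ] [DecidableEq κ]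

lemma opNorm_eq_l2_opNorm (A : Matrix ι κ ℝ) : opNorm A = ‖A‖ := by
  rw [l2_opNorm_def, ← ContinuousLinearMap.sSup_unitClosedBall_eq_norm, opNorm]
  congr 1
  ext r
  simp only [Set.mem_ofPred_eq, Set.mem_image, Metric.mem_closedBall, dist_zero_right,
    euclNorm_eq_norm_toLp]
  constructor
  · rintro ⟨v, hv, rfl⟩
    exact ⟨WithLp.toLp 2 v, hv, rfl⟩
  · rintro ⟨v, hv, rfl⟩
    exact ⟨v.ofLp, hv, rfl⟩

lemma opNorm_pos {A : Matrix ι κ ℝ} (hA : A ≠ 0) : 0 < opNorm A := by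
  rw [opNorm_eq_l2_opNorm]
  exact norm_pos_iff.mpr hA

lemma euclNorm_transpose_mulVec_le [DecidableEq ι] (A : Matrix ι κ ℝ) (w : ι → ℝ) :
    euclNorm (Aᵀ *ᵥ w) ≤ opNorm A * euclNorm w := by
  rw [euclNorm_eq_norm_toLp, euclNorm_eq_norm_toLp, opNorm_eq_l2_opNorm,
    ← l2_opNorm_conjTranspose, conjTranspose_eq_transpose_of_trivial]
  exact Aᵀ.l2_opNorm_mulVec (WithLp.toLp 2 w)

end OpNorm

section Rayleigh

variable {ι : Type*} [Fintype ι]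

lemma dotProduct_smul_one_mulVec [DecidableEq ι] (c : ℝ) (v : ι → ℝ) :
    v ⬝ᵥ ((c • (1 : Matrix ι ι ℝ)) *ᵥ v) = c * euclNorm v ^ 2 := by
  rw [smul_mulVec, one_mulVec, dotProduct_smul, smul_eq_mul,
    dotProduct_self_eq_euclNorm_sq]

lemma lambdaMin_of_isEmpty [IsEmpty ι] (M : Matrix ι ι ℝ) : lambdaMin M = 0 := by
  simp [lambdaMin, euclNorm]

lemma lambdaMin_zero : lambdaMin (0 : Matrix ι ι ℝ) = 0 :=
  le_antisymm (Real.sInf_nonpos (by rintro _ ⟨v, -, rfl⟩; simp))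
    (Real.sInf_nonneg (by rintro _ ⟨v, -, rfl⟩; simp))

lemma lambdaMin_le_dotProduct_mulVec {M : Matrix ι ι ℝ} (hM : M.PosSemidef) {v : ι → ℝ}
    (hv : euclNorm v = 1) : lambdaMin M ≤ v ⬝ᵥ (M *ᵥ v) :=
  csInf_le ⟨0, by rintro _ ⟨w, -, rfl⟩; simpa using hM.dotProduct_mulVec_nonneg w⟩ ⟨v, hv, rfl⟩

lemma lambdaMin_mul_euclNorm_sq_le {M : Matrix ι ι ℝ} (hM : M.PosSemidef) (v : ι → ℝ) :
    lambdaMin M * euclNorm v ^ 2 ≤ v ⬝ᵥ (M *ᵥ v) := by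
  rcases (euclNorm_nonneg v).eq_or_lt with hv | hv
  · rw [← hv]
    simpa using hM.dotProduct_mulVec_nonneg v
  have hunit : euclNorm ((euclNorm v)⁻¹ • v) = 1 := by
    rw [euclNorm_eq_norm_toLp, WithLp.toLp_smul, norm_smul, ← euclNorm_eq_norm_toLp,
      Real.norm_eq_abs, abs_of_pos (inv_pos.mpr hv), inv_mul_cancel₀ hv.ne']
  have h := lambdaMin_le_dotProduct_mulVec hM hunit
  rw [mulVec_smul, dotProduct_smul, smul_dotProduct, smul_eq_mul, smul_eq_mul,
    ← mul_assoc, ← sq, inv_pow, inv_mul_eq_div, le_div_iff₀ (by positivity)] at h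
  exact h

lemma posDef_of_lambdaMin_pos {M : Matrix ι ι ℝ} (hM : M.PosSemidef) (hpos : 0 < lambdaMin M) :
    M.PosDef := by
  refine PosDef.of_dotProduct_mulVec_pos hM.1 fun v hv => ?_
  have hnorm : 0 < euclNorm v := by
    rw [euclNorm_eq_norm_toLp]
    exact norm_pos_iff.mpr fun h => hv (by simpa using congrArg WithLp.ofLp h)
  simpa using (mul_pos hpos (pow_pos hnorm 2)).trans_le (lambdaMin_mul_euclNorm_sq_le hM v)

variable [DecidableEq ι] [Nonempty ι]

lemma le_lambdaMin_of_posSemidef_sub {N : Matrix ι ι ℝ} {c : ℝ}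
    (h : (N - c • 1).PosSemidef) : c ≤ lambdaMin N := by
  obtain ⟨v, hv⟩ := exists_euclNorm_eq_one (ι := ι)
  refine le_csInf ⟨_, v, hv, rfl⟩ ?_
  rintro _ ⟨w, hw, rfl⟩
  have := h.dotProduct_mulVec_nonneg w
  rw [star_trivial, sub_mulVec, dotProduct_sub, dotProduct_smul_one_mulVec, hw] at this
  linarith

lemma lambdaMax_le_of_posSemidef_sub {N : Matrix ι ι ℝ} {c : ℝ}
    (h : (c • 1 - N).PosSemidef) : lambdaMax N ≤ c := by
  obtain ⟨v, hv⟩ := exists_euclNorm_eq_one (ι := ι)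
  refine csSup_le ⟨_, v, hv, rfl⟩ ?_
  rintro _ ⟨w, hw, rfl⟩
  have := h.dotProduct_mulVec_nonneg w
  rw [star_trivial, sub_mulVec, dotProduct_sub, dotProduct_smul_one_mulVec, hw] at this
  linarith

lemma condNum_le_div {N : Matrix ι ι ℝ} {a b : ℝ} (ha : 0 < a) (hb : 0 ≤ b)
    (hlo : (N - a • 1).PosSemidef) (hhi : (b • 1 - N).PosSemidef) : condNum N ≤ b / a :=
  div_le_div₀ hb (lambdaMax_le_of_posSemidef_sub hhi) ha (le_lambdaMin_of_posSemidef_sub hlo)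

end Rayleigh

section Loewner

variable {ι : Type*} [Fintype ι]

lemma posSemidef_sub_of_dotProduct_mulVec_le {P Q : Matrix ι ι ℝ} (hP : P.IsHermitian)
    (hQ : Q.IsHermitian) (h : ∀ w, w ⬝ᵥ (P *ᵥ w) ≤ w ⬝ᵥ (Q *ᵥ w)) : (Q - P).PosSemidef :=
  .of_dotProduct_mulVec_nonneg (hQ.sub hP) fun w => by
    rw [star_trivial, sub_mulVec, dotProduct_sub, sub_nonneg]
    exact h w

variable [DecidableEq ι] {M P T : Matrix ι ι ℝ} {c : ℝ}

lemma posSemidef_conj_sub_smul_one (hT : T * M * Tᵀ = 1) (h : (P - c • M).PosSemidef) :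
    (T * P * Tᵀ - c • 1).PosSemidef := by
  simpa [mul_sub, sub_mul, hT] using h.mul_mul_conjTranspose_same T

lemma posSemidef_conj_smul_one_sub (hT : T * M * Tᵀ = 1) (h : (c • M - P).PosSemidef) :
    (c • 1 - T * P * Tᵀ).PosSemidef := by
  simpa [mul_sub, sub_mul, hT] using h.mul_mul_conjTranspose_same T

end Loewner

namespace Matrix.PosSemidef

variable {ι : Type*} [Fintype ι] [DecidableEq ι] {M : Matrix ι ι ℝ}

lemma sqrt_mul_self (hM : M.PosSemidef) : hM.sqrt * hM.sqrt = M := by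
  have hU : (star hM.1.eigenvectorUnitary : Matrix ι ι ℝ) * hM.1.eigenvectorUnitary.1 = 1 :=
    Unitary.star_mul_self_of_mem hM.1.eigenvectorUnitary.2
  have hD : diagonal ((↑) ∘ (Real.sqrt ∘ hM.1.eigenvalues)) *
      diagonal ((↑) ∘ (Real.sqrt ∘ hM.1.eigenvalues)) =
      diagonal (RCLike.ofReal ∘ hM.1.eigenvalues : ι → ℝ) := by
    rw [diagonal_mul_diagonal]
    congr 1
    funext i
    simp [Real.mul_self_sqrt (hM.eigenvalues_nonneg i)]
  conv_rhs => rw [hM.1.spectral_theorem, Unitary.conjStarAlgAut_apply]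
  calc _ = hM.1.eigenvectorUnitary.1 * (diagonal ((↑) ∘ (Real.sqrt ∘ hM.1.eigenvalues)) *
        ((star hM.1.eigenvectorUnitary : Matrix ι ι ℝ) * hM.1.eigenvectorUnitary.1) *
        diagonal ((↑) ∘ (Real.sqrt ∘ hM.1.eigenvalues))) *
        (star hM.1.eigenvectorUnitary : Matrix ι ι ℝ) := by
        simp only [PosSemidef.sqrt, Matrix.mul_assoc]
    _ = _ := by rw [hU, Matrix.mul_one, hD]

lemma isHermitian_sqrt (hM : M.PosSemidef) : hM.sqrt.IsHermitian := by
  have hD : (diagonal ((↑) ∘ (Real.sqrt ∘ hM.1.eigenvalues)) : Matrix ι ι ℝ).PosSemidef :=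
    posSemidef_diagonal_iff.mpr fun i => by simp [Real.sqrt_nonneg]
  simpa [PosSemidef.sqrt, star_eq_conjTranspose] using
    (hD.mul_mul_conjTranspose_same hM.1.eigenvectorUnitary.1).1

lemma transpose_sqrt (hM : M.PosSemidef) : hM.sqrtᵀ = hM.sqrt := by
  simpa [IsHermitian, conjTranspose_eq_transpose_of_trivial] using hM.isHermitian_sqrt

lemma inv_sqrt_mul_mul_inv_sqrt (hM : M.PosSemidef) (hdet : IsUnit M.det) :
    hM.sqrt⁻¹ * M * hM.sqrt⁻¹ = 1 := by
  have hS : IsUnit hM.sqrt.det := by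
    rw [← isUnit_mul_self_iff, ← det_mul, hM.sqrt_mul_self]
    exact hdet
  have hSS := hM.sqrt_mul_self
  generalize hM.sqrt = S at hS hSS ⊢
  subst hSS
  rw [← Matrix.mul_assoc, nonsing_inv_mul _ hS, Matrix.one_mul, mul_nonsing_inv _ hS]

end Matrix.PosSemidef

lemma norm_add_sq_bounds {E : Type*} [SeminormedAddCommGroup E] {a b : E} {β : ℝ} (hβ : β ≤ 1)
    (hb : ‖b‖ ≤ β * ‖a‖) :
    (1 - β) ^ 2 * ‖a‖ ^ 2 ≤ ‖a + b‖ ^ 2 ∧ ‖a + b‖ ^ 2 ≤ (1 + β) ^ 2 * ‖a‖ ^ 2 := by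
  have hlo : (1 - β) * ‖a‖ ≤ ‖a + b‖ := by
    have := norm_sub_norm_le a (-b)
    rw [norm_neg, sub_neg_eq_add] at this
    linarith
  have hhi : ‖a + b‖ ≤ (1 + β) * ‖a‖ := by linarith [norm_add_le a b]
  constructor
  · rw [← mul_pow]
    exact pow_le_pow_left₀ (mul_nonneg (sub_nonneg.mpr hβ) (norm_nonneg a)) hlo 2
  · rw [← mul_pow]
    exact pow_le_pow_left₀ (norm_nonneg _) hhi 2

section Normal

variable {m n : ℕ} (A : Matrix (Fin m) (Fin n) ℝ)

lemma dotProduct_normal_mulVec (d : Fin n → ℝ) (w : Fin m → ℝ) :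
    w ⬝ᵥ ((A * diagonal d ^ 2 * Aᵀ) *ᵥ w) = euclNorm (d * (Aᵀ *ᵥ w)) ^ 2 := by
  rw [← mulVec_mulVec, ← mulVec_mulVec, dotProduct_mulVec w A, ← mulVec_transpose,
    diagonal_pow, euclNorm_sq]
  simp only [dotProduct, mulVec_diagonal, Pi.pow_apply, Pi.mul_apply]
  exact Finset.sum_congr rfl fun i _ => by ring

lemma normal_quadForm_perturbation {x Δx : Fin n → ℝ} {β : ℝ} (hβ0 : 0 ≤ β) (hβ : β ≤ 1)
    (hΔx : opNorm A * euclNorm Δx ≤ β * Real.sqrt (lambdaMin (A * diagonal x ^ 2 * Aᵀ)))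
    (w : Fin m → ℝ) :
    (1 - β) ^ 2 * (w ⬝ᵥ ((A * diagonal x ^ 2 * Aᵀ) *ᵥ w))
        ≤ w ⬝ᵥ ((A * diagonal (x + Δx) ^ 2 * Aᵀ) *ᵥ w)
      ∧ w ⬝ᵥ ((A * diagonal (x + Δx) ^ 2 * Aᵀ) *ᵥ w)
        ≤ (1 + β) ^ 2 * (w ⬝ᵥ ((A * diagonal x ^ 2 * Aᵀ) *ᵥ w)) := by
  set u := Aᵀ *ᵥ w
  have hw : Real.sqrt (lambdaMin (A * diagonal x ^ 2 * Aᵀ)) * euclNorm w ≤ euclNorm (x * u) := by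
    have h := Real.sqrt_le_sqrt (lambdaMin_mul_euclNorm_sq_le (normalPSD A x) w)
    rwa [dotProduct_normal_mulVec, Real.sqrt_mul' _ (sq_nonneg _), Real.sqrt_sq (euclNorm_nonneg _),
      Real.sqrt_sq (euclNorm_nonneg _)] at h
  have hΔu : euclNorm (Δx * u) ≤ β * euclNorm (x * u) :=
    calc euclNorm (Δx * u) ≤ euclNorm Δx * (opNorm A * euclNorm w) :=
          (euclNorm_mul_le Δx u).trans <| mul_le_mul_of_nonneg_left
            (euclNorm_transpose_mulVec_le A w) (euclNorm_nonneg Δx)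
      _ = opNorm A * euclNorm Δx * euclNorm w := by ring
      _ ≤ β * Real.sqrt (lambdaMin (A * diagonal x ^ 2 * Aᵀ)) * euclNorm w :=
          mul_le_mul_of_nonneg_right hΔx (euclNorm_nonneg w)
      _ ≤ β * euclNorm (x * u) := by
          rw [mul_assoc]; exact mul_le_mul_of_nonneg_left hw hβ0
  simp only [dotProduct_normal_mulVec, add_mul, euclNorm_eq_norm_toLp, WithLp.toLp_add] at hΔu ⊢
  exact norm_add_sq_bounds hβ hΔu

lemma normal_loewner_perturbation {x Δx : Fin n → ℝ} {β : ℝ} (hβ0 : 0 ≤ β) (hβ : β ≤ 1)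
    (hΔx : opNorm A * euclNorm Δx ≤ β * Real.sqrt (lambdaMin (A * diagonal x ^ 2 * Aᵀ))) :
    (A * diagonal (x + Δx) ^ 2 * Aᵀ - (1 - β) ^ 2 • (A * diagonal x ^ 2 * Aᵀ)).PosSemidef ∧
      ((1 + β) ^ 2 • (A * diagonal x ^ 2 * Aᵀ) - A * diagonal (x + Δx) ^ 2 * Aᵀ).PosSemidef := by
  have hM := (normalPSD A x).1
  have hM' := (normalPSD A (x + Δx)).1
  have h := normal_quadForm_perturbation A hβ0 hβ hΔx
  constructor
  · refine posSemidef_sub_of_dotProduct_mulVec_le (hM.smul (.all _)) hM' fun w => ?_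
    simpa [smul_mulVec] using (h w).1
  · refine posSemidef_sub_of_dotProduct_mulVec_le hM' (hM.smul (.all _)) fun w => ?_
    simpa [smul_mulVec] using (h w).2

end Normal

theorem stmt_2_general {m n : ℕ} (A : Matrix (Fin m) (Fin n) ℝ)
    (x : Fin n → ℝ)
    (hlam : 0 < lambdaMin (A * Matrix.diagonal x ^ 2 * Aᵀ))
    (β : ℝ) (hβ : β ≤ 1)
    (Δx : Fin n → ℝ)
    (hΔx : euclNorm Δx ≤ Real.sqrt (lambdaMin (A * Matrix.diagonal x ^ 2 * Aᵀ)) / opNorm A * β) :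
    (((((normalPSD A x).sqrt)⁻¹ * (A * Matrix.diagonal (x + Δx) ^ 2 * Aᵀ) *
          ((normalPSD A x).sqrt)⁻¹)
        - (1 - β) ^ 2 • (1 : Matrix (Fin m) (Fin m) ℝ)).PosSemidef
      ∧ ((1 + β) ^ 2 • (1 : Matrix (Fin m) (Fin m) ℝ)
        - (((normalPSD A x).sqrt)⁻¹ * (A * Matrix.diagonal (x + Δx) ^ 2 * Aᵀ) *
          ((normalPSD A x).sqrt)⁻¹)).PosSemidef)
    ∧ (β < 1 →
        (A * Matrix.diagonal (x + Δx) ^ 2 * Aᵀ).PosDef ∧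
        condNum (((normalPSD A x).sqrt)⁻¹ * (A * Matrix.diagonal (x + Δx) ^ 2 * Aᵀ) *
            ((normalPSD A x).sqrt)⁻¹)
          ≤ ((1 + β) / (1 - β)) ^ 2) := by
  set M := A * diagonal x ^ 2 * Aᵀ
  have hMpd : M.PosDef := posDef_of_lambdaMin_pos (normalPSD A x) hlam
  have : Nonempty (Fin m) := by
    by_contra h
    simp [not_nonempty_iff.mp h, lambdaMin_of_isEmpty] at hlam
  have hA : 0 < opNorm A := opNorm_pos <| by
    rintro rfl
    simp [M, lambdaMin_zero] at hlam
  have hβ0 : 0 ≤ β := nonneg_of_mul_nonneg_right ((euclNorm_nonneg Δx).trans hΔx)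
    (div_pos (Real.sqrt_pos.mpr hlam) hA)
  have hΔ : opNorm A * euclNorm Δx ≤ β * Real.sqrt (lambdaMin M) :=
    calc opNorm A * euclNorm Δx ≤ opNorm A * (Real.sqrt (lambdaMin M) / opNorm A * β) :=
          mul_le_mul_of_nonneg_left hΔx hA.le
      _ = β * Real.sqrt (lambdaMin M) := by field_simp
  obtain ⟨hlo, hhi⟩ := normal_loewner_perturbation A hβ0 hβ hΔ
  set T := ((normalPSD A x).sqrt)⁻¹
  have hTt : Tᵀ = T := by rw [transpose_nonsing_inv, (normalPSD A x).transpose_sqrt]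
  have hT : T * M * Tᵀ = 1 := by
    rw [hTt]
    exact (normalPSD A x).inv_sqrt_mul_mul_inv_sqrt hMpd.det_pos.ne'.isUnit
  have hloN := posSemidef_conj_sub_smul_one hT hlo
  have hhiN := posSemidef_conj_smul_one_sub hT hhi
  rw [hTt] at hloN hhiN
  refine ⟨⟨hloN, hhiN⟩, fun hβ1 => ?_⟩
  have hc : 0 < (1 - β) ^ 2 := pow_pos (sub_pos.mpr hβ1) 2
  refine ⟨by simpa [M] using PosDef.posSemidef_add hlo (hMpd.smul hc), ?_⟩
  rw [div_pow]
  exact condNum_le_div hc (sq_nonneg _) hloN hhiN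

/-- conditioning within the Euclidean ball. -/
theorem stmt_2 {m n : ℕ} (A : Matrix (Fin m) (Fin n) ℝ)
    (hrank : A.rank = m)
    (x : Fin n → ℝ) (hx : ∀ i, 0 < x i)
    (hlam : 0 < lambdaMin (A * Matrix.diagonal x ^ 2 * Aᵀ))
    (β : ℝ) (hβ : β ≤ 1)
    (Δx : Fin n → ℝ)
    (hΔx : euclNorm Δx ≤ Real.sqrt (lambdaMin (A * Matrix.diagonal x ^ 2 * Aᵀ)) / opNorm A * β) :
    (((((normalPSD A x).sqrt)⁻¹ * (A * Matrix.diagonal (x + Δx) ^ 2 * Aᵀ) *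
          ((normalPSD A x).sqrt)⁻¹)
        - (1 - β) ^ 2 • (1 : Matrix (Fin m) (Fin m) ℝ)).PosSemidef
      ∧ ((1 + β) ^ 2 • (1 : Matrix (Fin m) (Fin m) ℝ)
        - (((normalPSD A x).sqrt)⁻¹ * (A * Matrix.diagonal (x + Δx) ^ 2 * Aᵀ) *
          ((normalPSD A x).sqrt)⁻¹)).PosSemidef)
    ∧ (β < 1 →
        (A * Matrix.diagonal (x + Δx) ^ 2 * Aᵀ).PosDef ∧
        condNum (((normalPSD A x).sqrt)⁻¹ * (A * Matrix.diagonal (x + Δx) ^ 2 * Aᵀ) *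
            ((normalPSD A x).sqrt)⁻¹)
          ≤ ((1 + β) / (1 - β)) ^ 2) :=
  stmt_2_general A x hlam β hβ Δx hΔx
end

section
/- Under assumption A1, let μ > 0, let x ∈ F_p together with (y, s) ∈ F_d satisfy the centering condition Xs = μe (componentwise x_j s_j = μ), and let (x*, y*, s*) be a strictly complementary optimal primal-dual pair. Then for every index j ∈ N one has x_j ≤ μ n / s*_j ≤ γμ, where γ = n / min_{j'∈N} s*_{j'}. -/
open Matrix

/-! Primal feasible points differ by an element of `ker A` and dual slacks by one of `range Aᵀ`,
so `(x - x*) ⬝ (s - s*) = 0`. With `x* ⬝ s* = 0` and `x ⬝ s = nμ` this reads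
`x ⬝ s* + x* ⬝ s = nμ`, and since every term is nonnegative, `x_j s*_j ≤ nμ`. -/

section PrimalDual

variable {R ι κ : Type*} [Fintype ι] [Fintype κ]

theorem sub_dotProduct_sub_eq_zero_of_feasible [CommRing R] {A : Matrix κ ι R} {b : κ → R}
    {c x x' s s' : ι → R} {y y' : κ → R} (hx : A *ᵥ x = b) (hx' : A *ᵥ x' = b)
    (hs : Aᵀ *ᵥ y + s = c) (hs' : Aᵀ *ᵥ y' + s' = c) :
    (x - x') ⬝ᵥ (s - s') = 0 := by
  have hslack : s - s' = Aᵀ *ᵥ (y' - y) := by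
    rw [mulVec_sub]
    linear_combination hs - hs'
  rw [hslack, dotProduct_mulVec, vecMul_transpose, mulVec_sub, hx, hx', sub_self,
    zero_dotProduct]

theorem dotProduct_le_of_sub_dotProduct_sub_eq_zero [CommRing R] [PartialOrder R]
    [IsOrderedRing R] {x x' s s' : ι → R} (horth : (x - x') ⬝ᵥ (s - s') = 0)
    (hcomp : x' ⬝ᵥ s' = 0) (hx' : ∀ i, 0 ≤ x' i) (hs : ∀ i, 0 ≤ s i) :
    x ⬝ᵥ s' ≤ x ⬝ᵥ s := by
  have hexpand : x ⬝ᵥ s' + x' ⬝ᵥ s = x ⬝ᵥ s := by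
    simp only [sub_dotProduct, dotProduct_sub] at horth
    linear_combination -horth + hcomp
  exact hexpand ▸ le_add_of_nonneg_right (dotProduct_nonneg_of_nonneg hx' hs)

theorem dotProduct_eq_card_mul_of_mul_eq [CommSemiring R] {x s : ι → R} {μ : R}
    (h : ∀ j, x j * s j = μ) : x ⬝ᵥ s = Fintype.card ι * μ := by
  simp [dotProduct, h]

theorem mul_le_dotProduct_of_nonneg [CommSemiring R] [PartialOrder R] [IsOrderedRing R]
    {x s : ι → R} (hx : ∀ i, 0 ≤ x i) (hs : ∀ i, 0 ≤ s i) (j : ι) : x j * s j ≤ x ⬝ᵥ s :=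
  Finset.single_le_sum (f := fun i => x i * s i) (fun i _ => mul_nonneg (hx i) (hs i))
    (Finset.mem_univ j)

end PrimalDual

theorem sInf_image_pos_mem_Ioc {ι : Type*} [Finite ι] {f : ι → ℝ} {j : ι} (hj : 0 < f j) :
    sInf (f '' {i | 0 < f i}) ∈ Set.Ioc 0 (f j) := by
  have hfin : (f '' {i | 0 < f i}).Finite := Set.toFinite _
  have hmem : f j ∈ f '' {i | 0 < f i} := ⟨j, hj, rfl⟩
  obtain ⟨i, hi, hinf⟩ := Set.Nonempty.csInf_mem ⟨_, hmem⟩ hfin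
  exact ⟨hinf ▸ hi, csInf_le hfin.bddBelow hmem⟩

theorem stmt_4_general {m n : ℕ} (A : Matrix (Fin m) (Fin n) ℝ) (b : Fin m → ℝ) (c : Fin n → ℝ)
    (μ : ℝ) (hμ : 0 < μ)
    (x : Fin n → ℝ) (y : Fin m → ℝ) (s : Fin n → ℝ)
    (hxfeas : A *ᵥ x = b) (hxnn : ∀ i, 0 ≤ x i)
    (hdfeas : Aᵀ *ᵥ y + s = c) (hsnn : ∀ i, 0 ≤ s i)
    (hcenter : ∀ j, x j * s j = μ)
    -- a strictly complementary optimal primal-dual pair (x*, y*, s*)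
    (xstar : Fin n → ℝ) (ystar : Fin m → ℝ) (sstar : Fin n → ℝ)
    (hxsfeas : A *ᵥ xstar = b) (hxsnn : ∀ i, 0 ≤ xstar i)
    (hdsfeas : Aᵀ *ᵥ ystar + sstar = c) (hssnn : ∀ i, 0 ≤ sstar i)
    (hcomp : xstar ⬝ᵥ sstar = 0)
    :
    ∀ j, 0 < sstar j →
      x j ≤ μ * n / sstar j ∧
      μ * n / sstar j ≤ (n / sInf (sstar '' {j | 0 < sstar j})) * μ := by
  intro j hj
  have hgap : x ⬝ᵥ sstar ≤ n * μ := by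
    have horth := sub_dotProduct_sub_eq_zero_of_feasible hxfeas hxsfeas hdfeas hdsfeas
    simpa [dotProduct_eq_card_mul_of_mul_eq hcenter] using
      dotProduct_le_of_sub_dotProduct_sub_eq_zero horth hcomp hxsnn hsnn
  obtain ⟨hinf_pos, hinf_le⟩ := sInf_image_pos_mem_Ioc hj
  constructor
  · rw [le_div_iff₀ hj]
    linarith [mul_le_dotProduct_of_nonneg hxnn hssnn j]
  · calc μ * n / sstar j ≤ μ * n / sInf (sstar '' {j | 0 < sstar j}) :=
          div_le_div_of_nonneg_left (by positivity) hinf_pos hinf_le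
      _ = _ := by ring

/-- bound on centered primal coordinates over the
non-basic index set `N`. -/
theorem stmt_4 {m n : ℕ} (A : Matrix (Fin m) (Fin n) ℝ) (b : Fin m → ℝ) (c : Fin n → ℝ)
    -- Assumption A1: nonempty primal and dual interiors, full row rank
    (hrank : A.rank = m)
    (hFp0 : ∃ x0 : Fin n → ℝ, A *ᵥ x0 = b ∧ ∀ i, 0 < x0 i)
    (hFd0 : ∃ (y0 : Fin m → ℝ) (s0 : Fin n → ℝ), Aᵀ *ᵥ y0 + s0 = c ∧ ∀ i, 0 < s0 i)
    (μ : ℝ) (hμ : 0 < μ)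
    (x : Fin n → ℝ) (y : Fin m → ℝ) (s : Fin n → ℝ)
    (hxfeas : A *ᵥ x = b) (hxnn : ∀ i, 0 ≤ x i)
    (hdfeas : Aᵀ *ᵥ y + s = c) (hsnn : ∀ i, 0 ≤ s i)
    (hcenter : ∀ j, x j * s j = μ)
    -- a strictly complementary optimal primal-dual pair (x*, y*, s*)
    (xstar : Fin n → ℝ) (ystar : Fin m → ℝ) (sstar : Fin n → ℝ)
    (hxsfeas : A *ᵥ xstar = b) (hxsnn : ∀ i, 0 ≤ xstar i)
    (hdsfeas : Aᵀ *ᵥ ystar + sstar = c) (hssnn : ∀ i, 0 ≤ sstar i)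
    (hcomp : xstar ⬝ᵥ sstar = 0)
    (hstrict : ∀ j, 0 < xstar j + sstar j)
    :
    ∀ j, 0 < sstar j →
      x j ≤ μ * n / sstar j ∧
      μ * n / sstar j ≤ (n / sInf (sstar '' {j | 0 < sstar j})) * μ :=
  stmt_4_general A b c μ hμ x y s hxfeas hxnn hdfeas hsnn hcenter xstar ystar sstar hxsfeas hxsnn
    hdsfeas hssnn hcomp
end

section
/- Under assumption A1, for any μ > 0 and τ ∈ (0, 1), the central path point x^{(1−τ)μ} at the reduced barrier parameter (1−τ)μ satisfies δ(x^{(1−τ)μ}, μ) ≤ τ√n. -/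
/-! The central path point `x = x^ν`, `ν = (1 - τ)μ`, minimises the log barrier on the slice
`{Ax = b, x > 0}`, so the barrier gradient `c - ν X⁻¹ e` annihilates `ker A` and therefore lies
in the range of `Aᵀ`. Hence `s = ν X⁻¹ e` is a dual-feasible slack, and for it
`(1/μ) X s - e = -τ e`, a vector of norm `τ √n`. -/

open Matrix

theorem exists_transpose_mulVec_eq_of_forall_mulVec_eq_zero {ι κ : Type*} [Fintype ι] [Fintype κ]
    (A : Matrix κ ι ℝ) (v : ι → ℝ) (hv : ∀ d, A *ᵥ d = 0 → v ⬝ᵥ d = 0) :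
    ∃ y, Aᵀ *ᵥ y = v := by
  classical
  have hv' : dotProductBilin ℝ ℝ v ∈ LinearMap.range A.mulVecLin.dualMap := by
    rw [LinearMap.range_dualMap_eq_dualAnnihilator_ker, Submodule.mem_dualAnnihilator]
    exact hv
  obtain ⟨ψ, hψ⟩ := hv'
  refine ⟨fun k => ψ fun j => if k = j then 1 else 0, funext fun i => ?_⟩
  have hψi := LinearMap.congr_fun hψ (Pi.single i 1)
  rw [LinearMap.dualMap_apply, mulVecLin_apply, LinearMap.pi_apply_eq_sum_univ ψ] at hψi
  simpa [mulVec, dotProduct, mul_comm, Pi.single_apply] using hψi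

noncomputable def logBarrier {ι : Type*} [Fintype ι] (c : ι → ℝ) (ν : ℝ) (x : ι → ℝ) : ℝ :=
  c ⬝ᵥ x - ν * ∑ i, Real.log (x i)

theorem hasDerivAt_logBarrier_add_smul {ι : Type*} [Fintype ι] (c : ι → ℝ) (ν : ℝ)
    {x : ι → ℝ} (hx : ∀ i, x i ≠ 0) (d : ι → ℝ) :
    HasDerivAt (fun t : ℝ => logBarrier c ν (x + t • d))
      (c ⬝ᵥ d - ν * ∑ i, d i / x i) 0 := by
  have hlin : HasDerivAt (fun t : ℝ => c ⬝ᵥ (x + t • d)) (c ⬝ᵥ d) 0 := by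
    simpa [dotProduct_add, dotProduct_smul] using
      (hasDerivAt_mul_const (c ⬝ᵥ d)).const_add (c ⬝ᵥ x)
  have hlog : HasDerivAt (fun t : ℝ => ∑ i, Real.log (x i + t * d i)) (∑ i, d i / x i) 0 := by
    refine HasDerivAt.fun_sum fun i _ => ?_
    have hline : HasDerivAt (fun t : ℝ => x i + t * d i) (d i) 0 := by
      simpa using (hasDerivAt_mul_const (d i)).const_add (x i)
    simpa using hline.log (by simpa using hx i)
  simpa [logBarrier, mul_comm] using hlin.fun_sub (hlog.const_mul ν)

theorem logBarrier_stationary {ι κ : Type*} [Fintype ι] (A : Matrix κ ι ℝ) (b : κ → ℝ)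
    (c : ι → ℝ) (ν : ℝ) {x : ι → ℝ} (hx : ∀ i, 0 < x i)
    (hmin : IsMinOn (logBarrier c ν) {x' | A *ᵥ x' = b ∧ ∀ i, 0 < x' i} x)
    (hAx : A *ᵥ x = b) {d : ι → ℝ} (hd : A *ᵥ d = 0) :
    c ⬝ᵥ d - ν * ∑ i, d i / x i = 0 := by
  refine IsLocalMin.hasDerivAt_eq_zero ?_
    (hasDerivAt_logBarrier_add_smul c ν (fun i => (hx i).ne') d)
  have hpos : ∀ᶠ t in nhds (0 : ℝ), ∀ i, 0 < (x + t • d) i := by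
    refine Filter.eventually_all.2 fun i => ?_
    have hcont : Continuous fun t : ℝ => (x + t • d) i := by fun_prop
    exact continuousAt_const.eventually_lt hcont.continuousAt (by simpa using hx i)
  filter_upwards [hpos] with t ht
  simpa using hmin ⟨by simp [mulVec_add, mulVec_smul, hd, hAx], ht⟩

theorem exists_transpose_mulVec_add_eq_of_isMinOn_logBarrier {ι κ : Type*} [Fintype ι]
    [Fintype κ] (A : Matrix κ ι ℝ) (b : κ → ℝ) (c : ι → ℝ) (ν : ℝ) {x : ι → ℝ}
    (hx : ∀ i, 0 < x i) (hAx : A *ᵥ x = b)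
    (hmin : IsMinOn (logBarrier c ν) {x' | A *ᵥ x' = b ∧ ∀ i, 0 < x' i} x) :
    ∃ y, Aᵀ *ᵥ y + (fun i => ν / x i) = c := by
  obtain ⟨y, hy⟩ := exists_transpose_mulVec_eq_of_forall_mulVec_eq_zero A
    (c - fun i => ν / x i) fun d hd => by
      rw [sub_dotProduct, ← logBarrier_stationary A b c ν hx hmin hAx hd, sub_right_inj,
        dotProduct, Finset.mul_sum]
      exact Finset.sum_congr rfl fun i _ => by ring
  exact ⟨y, by rw [hy, sub_add_cancel]⟩

theorem euclNorm_const {ι : Type*} [Fintype ι] (a : ℝ) :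
    euclNorm (fun _ : ι => a) = |a| * Real.sqrt (Fintype.card ι) := by
  simp [euclNorm, Real.sqrt_sq_eq_abs, mul_comm]

theorem proxMin_le {m n : ℕ} (A : Matrix (Fin m) (Fin n) ℝ) (c x : Fin n → ℝ) (μ : ℝ)
    {y : Fin m → ℝ} {s : Fin n → ℝ} (hys : Aᵀ *ᵥ y + s = c) (hs : ∀ i, 0 ≤ s i) :
    proxMin A c x μ ≤ euclNorm (μ⁻¹ • (diagonal x *ᵥ s) - 1) := by
  refine csInf_le ⟨0, ?_⟩ ⟨y, s, hys, hs, rfl⟩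
  rintro _ ⟨-, -, -, -, rfl⟩
  exact Real.sqrt_nonneg _

theorem stmt_16_general {m n : ℕ} (A : Matrix (Fin m) (Fin n) ℝ) (b : Fin m → ℝ) (c : Fin n → ℝ)
    (μ : ℝ) (hμ : 0 < μ)
    (τ : ℝ) (hτ0 : 0 < τ) (hτ1 : τ < 1)
    -- the central path point x^((1-τ)μ)
    (xnu : Fin n → ℝ) (hxnufeas : A *ᵥ xnu = b) (hxnupos : ∀ i, 0 < xnu i)
    (hxnumin : ∀ x' : Fin n → ℝ, A *ᵥ x' = b → (∀ i, 0 < x' i) →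
      c ⬝ᵥ xnu - (1 - τ) * μ * ∑ i, Real.log (xnu i)
        ≤ c ⬝ᵥ x' - (1 - τ) * μ * ∑ i, Real.log (x' i)) :
    proxMin A c xnu μ ≤ τ * Real.sqrt n := by
  set s : Fin n → ℝ := fun i => (1 - τ) * μ / xnu i
  obtain ⟨y, hys⟩ := exists_transpose_mulVec_add_eq_of_isMinOn_logBarrier A b c ((1 - τ) * μ)
    hxnupos hxnufeas fun x' hx' => hxnumin x' hx'.1 hx'.2
  have hs : ∀ i, 0 ≤ s i := fun i => div_nonneg (mul_nonneg (by linarith) hμ.le) (hxnupos i).le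
  have hXs : μ⁻¹ • (diagonal xnu *ᵥ s) - 1 = fun _ => -τ := by
    funext i
    have hxi := (hxnupos i).ne'
    simp only [s, Pi.sub_apply, Pi.smul_apply, mulVec_diagonal, smul_eq_mul, Pi.one_apply]
    field_simp
    ring
  calc proxMin A c xnu μ ≤ euclNorm (μ⁻¹ • (diagonal xnu *ᵥ s) - 1) :=
        proxMin_le A c xnu μ hys hs
    _ = τ * Real.sqrt n := by rw [hXs, euclNorm_const, abs_neg, abs_of_pos hτ0, Fintype.card_fin]

/-- proximity of the central path point at the reduced barrier
parameter `(1-τ)μ` with respect to parameter `μ`. -/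
theorem stmt_16 {m n : ℕ} (A : Matrix (Fin m) (Fin n) ℝ) (b : Fin m → ℝ) (c : Fin n → ℝ)
    -- Assumption A1: nonempty primal and dual interiors, full row rank
    (hrank : A.rank = m)
    (hFp0 : ∃ x0 : Fin n → ℝ, A *ᵥ x0 = b ∧ ∀ i, 0 < x0 i)
    (hFd0 : ∃ (y0 : Fin m → ℝ) (s0 : Fin n → ℝ), Aᵀ *ᵥ y0 + s0 = c ∧ ∀ i, 0 < s0 i)
    (μ : ℝ) (hμ : 0 < μ)
    (τ : ℝ) (hτ0 : 0 < τ) (hτ1 : τ < 1)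
    -- the central path point x^((1-τ)μ)
    (xnu : Fin n → ℝ) (hxnufeas : A *ᵥ xnu = b) (hxnupos : ∀ i, 0 < xnu i)
    (hxnumin : ∀ x' : Fin n → ℝ, A *ᵥ x' = b → (∀ i, 0 < x' i) →
      c ⬝ᵥ xnu - (1 - τ) * μ * ∑ i, Real.log (xnu i)
        ≤ c ⬝ᵥ x' - (1 - τ) * μ * ∑ i, Real.log (x' i)) :
    proxMin A c xnu μ ≤ τ * Real.sqrt n :=
  stmt_16_general A b c μ hμ τ hτ0 hτ1 xnu hxnufeas hxnupos hxnumin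
end
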